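/- Let N ≥ 1, k > 0 and w̲ > 0. Suppose m : ℝ → (ZMod N → ℝ) is a family of differentiable functions t ↦ m_i(t) and w : ℝ → (ZMod N → ℝ) satisfies w_i(t) ≥ w̲ for all i and t ≥ 0, and suppose the dynamics m_i′(t) = k·(m_{i+1}(t) − m_i(t))·w_{i+1}(t) − k·(m_i(t) − m_{i−1}(t))·w_i(t) holds for all i ∈ ZMod N and t ≥ 0. Let m̄ = (1/N)∑_i m_i(t) (which is constant in t) and V(t) = ½∑_{i ∈ ZMod N} (m_i(t) − m̄)². Then V(t) ≤ V(0) · exp(−(2 k w̲ / N²) t) for all t ≥ 0. -/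

import Mathlib

/-!
With the flux `Fᵢ = k (m_{i+1} − mᵢ) w_{i+1}` across the `(i+1)`-st bar the dynamics reads
`ṁᵢ = Fᵢ − F_{i−1}`, so the total workload is conserved and `eᵢ = mᵢ − m̄` has mean zero for all
time. Summation by parts turns `V' = ∑ eᵢ ṁᵢ` into `−k ∑ w_{i+1} (e_{i+1} − eᵢ)²`, which is at most
`−k w̲ ∑ (e_{i+1} − eᵢ)²`. A discrete Poincaré inequality on the cycle,
`∑ eᵢ² ≤ N² ∑ (e_{i+1} − eᵢ)²` for mean-zero `e` (telescope from a point where `e ≤ 0`, resp.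
`e ≥ 0`, along the cycle, then Cauchy–Schwarz), gives `V' ≤ −(2 k w̲ / N²) V`, and Grönwall's
inequality concludes.
-/

open Finset Real

section SummationByParts

variable {G R : Type*} [AddGroup G] [Fintype G] [CommRing R] (g : G)

theorem sum_sub_comp_sub_eq_zero (F : G → R) : ∑ i, (F i - F (i - g)) = 0 := by
  rw [sum_sub_distrib, sub_eq_zero]
  exact ((Equiv.subRight g).sum_comp F).symm

theorem sum_mul_sub_comp_sub (e F : G → R) :
    ∑ i, e i * (F i - F (i - g)) = -∑ i, F i * (e (i + g) - e i) := by
  have hshift : ∑ i, e i * F (i - g) = ∑ i, e (i + g) * F i := by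
    simpa using (Equiv.subRight g).sum_comp (fun i => e (i + g) * F i)
  simp only [mul_sub, sum_sub_distrib, hshift]
  simp only [mul_comm (F _)]
  ring

end SummationByParts

section CyclePoincare

variable {N : ℕ} [NeZero N]

theorem ZMod.sum_range_comp_add_natCast {M : Type*} [AddCommMonoid M] (f : ZMod N → M)
    (a : ZMod N) : ∑ s ∈ range N, f (a + s) = ∑ j, f j :=
  sum_nbij' (fun s => a + s) (fun j => (j - a).val) (by simp)
    (fun j _ => mem_range.2 (ZMod.val_lt _))
    (fun s hs => by simp [ZMod.val_cast_of_lt (mem_range.1 hs)]) (fun j _ => by simp)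
    (fun _ _ => rfl)

theorem norm_sub_le_sum_norm_sub_succ {E : Type*} [SeminormedAddCommGroup E] (e : ZMod N → E)
    (a b : ZMod N) : ‖e b - e a‖ ≤ ∑ j, ‖e (j + 1) - e j‖ := by
  have htelescope : e b - e a = ∑ s ∈ range (b - a).val, (e (a + s + 1) - e (a + s)) := by
    have := sum_range_sub (fun s : ℕ => e (a + s)) (b - a).val
    simp only [Nat.cast_add, Nat.cast_one, ← add_assoc, ZMod.natCast_val, ZMod.cast_id', id,
      add_sub_cancel, Nat.cast_zero, add_zero] at this
    exact this.symm
  calc ‖e b - e a‖ ≤ ∑ s ∈ range (b - a).val, ‖e (a + s + 1) - e (a + s)‖ := by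
        rw [htelescope]; exact norm_sum_le _ _
    _ ≤ ∑ s ∈ range N, ‖e (a + s + 1) - e (a + s)‖ :=
        sum_le_sum_of_subset_of_nonneg (range_subset_range.2 (ZMod.val_lt _).le)
          fun _ _ _ => norm_nonneg _
    _ = ∑ j, ‖e (j + 1) - e j‖ := ZMod.sum_range_comp_add_natCast (fun j => ‖e (j + 1) - e j‖) a

theorem sum_sq_le_sq_mul_sum_sq_sub_succ (e : ZMod N → ℝ) (he : ∑ i, e i = 0) :
    ∑ i, e i ^ 2 ≤ (N : ℝ) ^ 2 * ∑ i, (e (i + 1) - e i) ^ 2 := by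
  set S := ∑ j, |e (j + 1) - e j|
  obtain ⟨i₀, -, hi₀⟩ := exists_le_of_sum_le (f := e) (g := 0) univ_nonempty (by simp [he])
  obtain ⟨i₁, -, hi₁⟩ := exists_le_of_sum_le (f := 0) (g := e) univ_nonempty (by simp [he])
  have hbound : ∀ i, e i ^ 2 ≤ S ^ 2 := fun i => by
    have h₀ := (le_abs_self _).trans (norm_sub_le_sum_norm_sub_succ e i₀ i)
    have h₁ := (le_abs_self _).trans (norm_sub_le_sum_norm_sub_succ e i i₁)
    simp only [Pi.zero_apply] at hi₀ hi₁
    simp only [Real.norm_eq_abs] at h₀ h₁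
    exact sq_le_sq' (by linarith) (by linarith)
  have hS : S ^ 2 ≤ N * ∑ j, (e (j + 1) - e j) ^ 2 := by
    simpa [S, sq_abs, ZMod.card] using
      sq_sum_le_card_mul_sum_sq (s := univ) (f := fun j => |e (j + 1) - e j|)
  calc ∑ i, e i ^ 2 ≤ ∑ _i : ZMod N, S ^ 2 := sum_le_sum fun i _ => hbound i
    _ = N * S ^ 2 := by simp [ZMod.card]
    _ ≤ N * (N * ∑ j, (e (j + 1) - e j) ^ 2) := by gcongr
    _ = (N : ℝ) ^ 2 * ∑ i, (e (i + 1) - e i) ^ 2 := by ring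

end CyclePoincare

theorem le_mul_exp_of_hasDerivAt_le_mul {f f' : ℝ → ℝ} {K a t : ℝ}
    (hf : ∀ x, a ≤ x → HasDerivAt f (f' x) x) (hbound : ∀ x, a ≤ x → f' x ≤ K * f x)
    (ht : a ≤ t) : f t ≤ f a * exp (K * (t - a)) := by
  have := le_gronwallBound_of_liminf_deriv_right_le (δ := f a) (ε := 0) (b := t)
    (fun x hx => (hf x hx.1).continuousAt.continuousWithinAt)
    (fun x hx _ hr => (hf x hx.1).hasDerivWithinAt.liminf_right_slope_le hr) le_rfl
    (fun x hx => by simpa using hbound x hx.1) t ⟨ht, le_rfl⟩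
  rwa [gronwallBound_ε0] at this

theorem sum_eq_of_hasDerivAt_sub_comp_sub {G : Type*} [AddGroup G] [Fintype G] (g : G)
    {m F : ℝ → G → ℝ} {a t : ℝ}
    (hm : ∀ i x, a ≤ x → HasDerivAt (fun s => m s i) (F x i - F x (i - g)) x) (ht : a ≤ t) :
    ∑ i, m t i = ∑ i, m a i := by
  have hsum : ∀ x, a ≤ x → HasDerivAt (fun s => ∑ i, m s i) 0 x := fun x hx =>
    (HasDerivAt.fun_sum fun i _ => hm i x hx).congr_deriv (sum_sub_comp_sub_eq_zero g (F x))
  exact constant_of_has_deriv_right_zero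
    (fun x hx => (hsum x hx.1).continuousAt.continuousWithinAt)
    (fun x hx => (hsum x hx.1).hasDerivWithinAt) t ⟨ht, le_rfl⟩

theorem hasDerivAt_half_sum_sq_sub {ι : Type*} [Fintype ι] {m : ℝ → ι → ℝ} {m' : ι → ℝ}
    {c x : ℝ} (hm : ∀ i, HasDerivAt (fun s => m s i) (m' i) x) :
    HasDerivAt (fun s => (1 / 2) * ∑ i, (m s i - c) ^ 2) (∑ i, (m x i - c) * m' i) x := by
  refine ((HasDerivAt.fun_sum fun i _ => ((hm i).sub_const c).fun_pow 2).const_mul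
    (1 / 2)).congr_deriv ?_
  simp only [mul_sum]
  refine sum_congr rfl fun i _ => ?_
  norm_num
  ring

theorem sum_sub_mul_weightedLaplacian_le {N : ℕ} [NeZero N] (u w : ZMod N → ℝ) {c k wlow : ℝ}
    (hk : 0 ≤ k) (hwlow : 0 ≤ wlow) (hw : ∀ i, wlow ≤ w i) (hc : ∑ i, (u i - c) = 0) :
    ∑ i, (u i - c) * (k * (u (i + 1) - u i) * w (i + 1) - k * (u i - u (i - 1)) * w i)
      ≤ -(2 * k * wlow / N ^ 2) * ((1 / 2) * ∑ i, (u i - c) ^ 2) := by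
  have hbyparts := sum_mul_sub_comp_sub 1 (fun i => u i - c)
    (fun i => k * (u (i + 1) - u i) * w (i + 1))
  have hpoincare := sum_sq_le_sq_mul_sum_sq_sub_succ (fun i => u i - c) hc
  simp only [sub_add_cancel, sub_sub_sub_cancel_right] at hbyparts hpoincare
  have hN : (N : ℝ) ≠ 0 := Nat.cast_ne_zero.2 (NeZero.ne N)
  rw [hbyparts]
  calc -∑ i, k * (u (i + 1) - u i) * w (i + 1) * (u (i + 1) - u i)
      ≤ -∑ i, k * wlow * (u (i + 1) - u i) ^ 2 := by
        refine neg_le_neg (sum_le_sum fun i _ => ?_)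
        calc k * wlow * (u (i + 1) - u i) ^ 2 ≤ k * w (i + 1) * (u (i + 1) - u i) ^ 2 := by
              gcongr; exact hw _
          _ = _ := by ring
    _ = -(k * wlow / N ^ 2) * (N ^ 2 * ∑ i, (u (i + 1) - u i) ^ 2) := by
        rw [← mul_sum]; field_simp
    _ ≤ -(k * wlow / N ^ 2) * ∑ i, (u i - c) ^ 2 := by
        rw [neg_mul, neg_mul, neg_le_neg_iff]; gcongr
    _ = -(2 * k * wlow / N ^ 2) * ((1 / 2) * ∑ i, (u i - c) ^ 2) := by ring

/-- The workload-equalization dynamics makes the Lyapunov function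
`V(t) = ½ ∑ᵢ (mᵢ(t) − m̄)²` decay exponentially: `V(t) ≤ V(0)·exp(−(2 k w̲/N²) t)`.
Here `m̄ = (1/N) ∑ᵢ mᵢ(0)`, which is constant in `t` along the dynamics. -/
theorem workload_equalization_exponential (N : ℕ) (hN : 1 ≤ N) (k wlow : ℝ)
    (hk : 0 < k) (hwlow : 0 < wlow) (m w : ℝ → ZMod N → ℝ)
    (hw : ∀ (i : ZMod N) (t : ℝ), 0 ≤ t → wlow ≤ w t i)
    (hdyn : ∀ (i : ZMod N) (t : ℝ), 0 ≤ t →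
      HasDerivAt (fun s => m s i)
        (k * (m t (i + 1) - m t i) * w t (i + 1) - k * (m t i - m t (i - 1)) * w t i) t) :
    haveI : NeZero N := ⟨by omega⟩
    ∀ t : ℝ, 0 ≤ t →
      (1 / 2) * ∑ i : ZMod N, (m t i - (1 / N) * ∑ j : ZMod N, m 0 j) ^ 2
        ≤ ((1 / 2) * ∑ i : ZMod N, (m 0 i - (1 / N) * ∑ j : ZMod N, m 0 j) ^ 2)
            * Real.exp (-(2 * k * wlow / (N : ℝ) ^ 2) * t) := by
  have : NeZero N := ⟨by omega⟩
  intro t ht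
  have hmean : ∀ x, 0 ≤ x → ∑ i, (m x i - (1 / N) * ∑ j, m 0 j) = 0 := fun x hx => by
    rw [sum_sub_distrib, sum_eq_of_hasDerivAt_sub_comp_sub 1
      (F := fun x i => k * (m x (i + 1) - m x i) * w x (i + 1))
      (fun i x hx => by simpa only [sub_add_cancel] using hdyn i x hx) hx]
    have hN₀ : (N : ℝ) ≠ 0 := Nat.cast_ne_zero.2 (NeZero.ne N)
    simp [ZMod.card, hN₀]
  simpa using le_mul_exp_of_hasDerivAt_le_mul
    (fun x hx => hasDerivAt_half_sum_sq_sub fun i => hdyn i x hx)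
    (fun x hx => sum_sub_mul_weightedLaplacian_le _ _ hk.le hwlow.le (hw · x hx) (hmean x hx)) ht
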